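/- arXiv:1307.1437 — 8 statements merged into one kernel-verified Lean document; each statement's English description precedes it below -/
import Mathlib

section
/- Let C and Ĉ be nonempty cones in ℝ^m (sets closed under multiplication by nonnegative scalars). Let τ > 0 and η ≥ 0 satisfy (1+η)τ < π/2. Suppose δ(C,Ĉ) ≤ (1/2)(sin((1+η)τ) − sin τ), and let ξ satisfy arcsin(sin τ + δ(C,Ĉ)) ≤ ξ ≤ arcsin(sin((1+η)τ) − δ(C,Ĉ)). Then for every nonzero y ∈ ℝ^m: (i) if ∠(y,C) ≤ τ then ∠(y,Ĉ) ≤ ξ, and (ii) if ∠(y,C) > (1+η)τ then ∠(y,Ĉ) > ξ. -/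
open scoped RealInnerProductSpace

/-- A cone: a set closed under multiplication by nonnegative scalars. -/
def IsCone {m : ℕ} (C : Set (EuclideanSpace ℝ (Fin m))) : Prop :=
  ∀ (t : ℝ), 0 ≤ t → ∀ x ∈ C, t • x ∈ C

/-- The discrepancy δ(C,Ĉ) between two cones: the Hausdorff-type maximum of the two
one-sided deviations measured over unit-norm elements (suprema over empty sets are 0). -/
noncomputable def coneDisc {m : ℕ} (C Chat : Set (EuclideanSpace ℝ (Fin m))) : ℝ :=
  max (⨆ y : {y : EuclideanSpace ℝ (Fin m) // y ∈ C ∧ ‖y‖ = 1},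
        Metric.infDist (y : EuclideanSpace ℝ (Fin m)) Chat)
      (⨆ y : {y : EuclideanSpace ℝ (Fin m) // y ∈ Chat ∧ ‖y‖ = 1},
        Metric.infDist (y : EuclideanSpace ℝ (Fin m)) C)

/-- The angle from a (nonzero) point to a cone: arcsin(dist(y,C)/‖y‖). -/
noncomputable def coneAngle {m : ℕ} (y : EuclideanSpace ℝ (Fin m))
    (C : Set (EuclideanSpace ℝ (Fin m))) : ℝ :=
  Real.arcsin (Metric.infDist y C / ‖y‖)

/-!
If `z ∈ C` is close to `y`, replacing `z` by the projection of `y` onto the ray through `z`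
keeps it in `C`, brings it no farther from `y`, and makes its norm at most `‖y‖`. A point of
`C` of norm `r` lies within `δ r` of `Ĉ` by scaling, so `dist(y,Ĉ) ≤ dist(y,C) + δ‖y‖`, i.e.
`sin ∠(y,Ĉ) ≤ sin ∠(y,C) + δ`, and symmetrically. Part (i) follows by monotonicity of `sin`
and `arcsin`, part (ii) by the same estimate with the roles of `C` and `Ĉ` exchanged.
-/

open Metric Real
open scoped Pointwise

theorem exists_nonneg_norm_smul_le_and_norm_sub_smul_le {E : Type*} [NormedAddCommGroup E]
    [InnerProductSpace ℝ E] (y z : E) :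
    ∃ t : ℝ, 0 ≤ t ∧ ‖t • z‖ ≤ ‖y‖ ∧ ‖y - t • z‖ ≤ ‖y - z‖ := by
  have hyz := norm_sub_sq_real y z
  rcases le_or_gt ⟪y, z⟫ 0 with h | h
  · refine ⟨0, le_rfl, by simp, ?_⟩
    rw [zero_smul, sub_zero, ← sq_le_sq₀ (norm_nonneg _) (norm_nonneg _)]
    nlinarith [sq_nonneg ‖z‖]
  -- `t • z` is the orthogonal projection of `y` onto the line through `z`.
  have hz : 0 < ‖z‖ := norm_pos_iff.2 fun hz => by simp [hz] at h
  set t := ⟪y, z⟫ / ‖z‖ ^ 2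
  have ht : 0 ≤ t := by positivity
  have htz : t * ‖z‖ ^ 2 = ⟪y, z⟫ := div_mul_cancel₀ _ (by positivity)
  refine ⟨t, ht, ?_, ?_⟩
  · rw [norm_smul, norm_of_nonneg ht, ← mul_le_mul_iff_left₀ hz]
    nlinarith [real_inner_le_norm y z]
  · rw [← sq_le_sq₀ (norm_nonneg _) (norm_nonneg _), norm_sub_sq_real, real_inner_smul_right,
      norm_smul, norm_of_nonneg ht, hyz]
    nlinarith [mul_nonneg (sq_nonneg ‖z‖) (sq_nonneg (t - 1))]

theorem coneDisc_comm {m : ℕ} (C Chat : Set (EuclideanSpace ℝ (Fin m))) :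
    coneDisc C Chat = coneDisc Chat C :=
  max_comm _ _

theorem coneDisc_nonneg {m : ℕ} (C Chat : Set (EuclideanSpace ℝ (Fin m))) :
    0 ≤ coneDisc C Chat :=
  (Real.iSup_nonneg fun _ => infDist_nonneg).trans (le_max_left _ _)

namespace IsCone

variable {m : ℕ} {C Chat : Set (EuclideanSpace ℝ (Fin m))}

theorem zero_mem (hC : IsCone C) (hne : C.Nonempty) : 0 ∈ C := by
  obtain ⟨x, hx⟩ := hne
  simpa using hC 0 le_rfl x hx

theorem infDist_le_norm (hC : IsCone C) (hne : C.Nonempty) (y : EuclideanSpace ℝ (Fin m)) :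
    infDist y C ≤ ‖y‖ := by
  simpa using infDist_le_dist_of_mem (x := y) (hC.zero_mem hne)

theorem smul_set_eq (hC : IsCone C) {t : ℝ} (ht : 0 < t) : t • C = C := by
  refine (Set.smul_set_subset_iff.2 fun x hx => hC t ht.le x hx).antisymm fun x hx => ?_
  exact ⟨t⁻¹ • x, hC _ (inv_nonneg.2 ht.le) x hx, smul_inv_smul₀ ht.ne' x⟩

theorem infDist_smul (hC : IsCone C) {t : ℝ} (ht : 0 < t) (x : EuclideanSpace ℝ (Fin m)) :
    infDist (t • x) C = t * infDist x C := by
  have := infDist_smul₀ ht.ne' C x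
  rwa [hC.smul_set_eq ht, norm_of_nonneg ht.le] at this

theorem infDist_le_coneDisc (hChat : IsCone Chat) (hChatne : Chat.Nonempty)
    {u : EuclideanSpace ℝ (Fin m)} (hu : u ∈ C ∧ ‖u‖ = 1) :
    infDist u Chat ≤ coneDisc C Chat := by
  refine le_max_of_le_left (le_ciSup (f := fun y : {y // y ∈ C ∧ ‖y‖ = 1} => infDist y.1 Chat)
    ⟨1, Set.forall_mem_range.2 fun y => ?_⟩ ⟨u, hu⟩)
  simpa [y.2.2] using hChat.infDist_le_norm hChatne y

theorem infDist_le_coneDisc_mul_norm (hC : IsCone C) (hChat : IsCone Chat)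
    (hChatne : Chat.Nonempty) {w : EuclideanSpace ℝ (Fin m)} (hw : w ∈ C) :
    infDist w Chat ≤ coneDisc C Chat * ‖w‖ := by
  rcases eq_or_ne w 0 with rfl | hw0
  · simp [infDist_zero_of_mem (hChat.zero_mem hChatne)]
  have hpos : 0 < ‖w‖ := norm_pos_iff.2 hw0
  have hu : ‖w‖⁻¹ • w ∈ C ∧ ‖‖w‖⁻¹ • w‖ = 1 :=
    ⟨hC _ (inv_nonneg.2 hpos.le) w hw, norm_smul_inv_norm hw0⟩
  calc infDist w Chat = ‖w‖ * infDist (‖w‖⁻¹ • w) Chat := by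
        rw [← hChat.infDist_smul hpos, smul_inv_smul₀ hpos.ne']
    _ ≤ ‖w‖ * coneDisc C Chat := by gcongr; exact hChat.infDist_le_coneDisc hChatne hu
    _ = coneDisc C Chat * ‖w‖ := mul_comm _ _

end IsCone

section

variable {m : ℕ} {C Chat : Set (EuclideanSpace ℝ (Fin m))}

theorem infDist_le_infDist_add_coneDisc_mul_norm (hC : IsCone C) (hCne : C.Nonempty)
    (hChat : IsCone Chat) (hChatne : Chat.Nonempty) (y : EuclideanSpace ℝ (Fin m)) :
    infDist y Chat ≤ infDist y C + coneDisc C Chat * ‖y‖ := by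
  rw [← sub_le_iff_le_add, le_infDist hCne]
  intro z hz
  obtain ⟨t, ht, hty, hyt⟩ := exists_nonneg_norm_smul_le_and_norm_sub_smul_le y z
  rw [sub_le_iff_le_add']
  calc infDist y Chat ≤ infDist (t • z) Chat + dist y (t • z) := infDist_le_infDist_add_dist
    _ ≤ coneDisc C Chat * ‖y‖ + dist y z := by
      gcongr
      · exact (hC.infDist_le_coneDisc_mul_norm hChat hChatne (hC t ht z hz)).trans
          (by gcongr; exact coneDisc_nonneg C Chat)
      · simpa only [dist_eq_norm] using hyt

theorem sin_coneAngle (hC : IsCone C) (hne : C.Nonempty) (y : EuclideanSpace ℝ (Fin m)) :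
    sin (coneAngle y C) = infDist y C / ‖y‖ :=
  sin_arcsin ((neg_nonpos.2 zero_le_one).trans (div_nonneg infDist_nonneg (norm_nonneg y)))
    (div_le_one_of_le₀ (hC.infDist_le_norm hne y) (norm_nonneg y))

theorem coneAngle_le_arcsin_sin_add_coneDisc (hC : IsCone C) (hCne : C.Nonempty)
    (hChat : IsCone Chat) (hChatne : Chat.Nonempty) (y : EuclideanSpace ℝ (Fin m)) :
    coneAngle y Chat ≤ arcsin (sin (coneAngle y C) + coneDisc C Chat) := by
  rw [sin_coneAngle hC hCne]
  refine monotone_arcsin ?_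
  rcases eq_or_ne y 0 with rfl | hy
  · simpa using coneDisc_nonneg C Chat
  rw [div_add' _ _ _ (norm_ne_zero_iff.2 hy)]
  gcongr
  exact infDist_le_infDist_add_coneDisc_mul_norm hC hCne hChat hChatne y

end

theorem stmt0 {m : ℕ} (C Chat : Set (EuclideanSpace ℝ (Fin m)))
    (hCne : C.Nonempty) (hChatne : Chat.Nonempty) (hC : IsCone C) (hChat : IsCone Chat)
    (τ η ξ : ℝ) (hτ : 0 < τ) (hη : 0 ≤ η) (hmax : (1 + η) * τ < Real.pi / 2)
    (hδ : coneDisc C Chat ≤ (Real.sin ((1 + η) * τ) - Real.sin τ) / 2)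
    (hξl : Real.arcsin (Real.sin τ + coneDisc C Chat) ≤ ξ)
    (hξu : ξ ≤ Real.arcsin (Real.sin ((1 + η) * τ) - coneDisc C Chat)) :
    ∀ y : EuclideanSpace ℝ (Fin m), y ≠ 0 →
      (coneAngle y C ≤ τ → coneAngle y Chat ≤ ξ) ∧
      ((1 + η) * τ < coneAngle y C → ξ < coneAngle y Chat) := by
  intro y _
  have hτη : τ ≤ (1 + η) * τ := by nlinarith
  constructor
  · intro hyC
    calc coneAngle y Chat ≤ arcsin (sin (coneAngle y C) + coneDisc C Chat) :=
          coneAngle_le_arcsin_sin_add_coneDisc hC hCne hChat hChatne y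
      _ ≤ arcsin (sin τ + coneDisc C Chat) := by
          gcongr
          exact sin_le_sin_of_le_of_le_pi_div_two (neg_pi_div_two_le_arcsin _) (by linarith) hyC
      _ ≤ ξ := hξl
  · intro hyC
    by_contra! hyChat
    have hsin : sin (coneAngle y Chat) ≤ sin ((1 + η) * τ) - coneDisc C Chat := by
      have h := sin_le_sin_of_le_of_le_pi_div_two (neg_pi_div_two_le_arcsin _)
        (arcsin_le_pi_div_two _) (hyChat.trans hξu)
      rwa [sin_arcsin (x := sin ((1 + η) * τ) - coneDisc C Chat)
        (by linarith [neg_one_le_sin τ, neg_one_le_sin ((1 + η) * τ)])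
        (by linarith [sin_le_one ((1 + η) * τ), coneDisc_nonneg C Chat])] at h
    have : coneAngle y C ≤ (1 + η) * τ :=
      calc coneAngle y C ≤ arcsin (sin (coneAngle y Chat) + coneDisc Chat C) :=
            coneAngle_le_arcsin_sin_add_coneDisc hChat hChatne hC hCne y
        _ ≤ arcsin (sin ((1 + η) * τ)) := by
            rw [coneDisc_comm]
            exact monotone_arcsin (by linarith)
        _ = (1 + η) * τ := arcsin_sin (by linarith [pi_pos]) hmax.le
    linarith
end

section
/- For any three nonempty cones C₁, C₂, C₃ ⊆ ℝ^m (sets closed under multiplication by nonnegative scalars), the discrepancy satisfies the triangle inequality δ(C₁,C₃) ≤ δ(C₁,C₂) + δ(C₂,C₃). -/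
/-!
Scaling a point of a cone scales its distance to another nonempty cone, so every `z ∈ C₂` lies
within `‖z‖ * δ(C₂, C₃)` of `C₃`. Given a unit vector `y ∈ C₁` and a point `z ∈ C₂` near it,
the orthogonal projection of `y` onto the ray through `z` stays in `C₂`, is no farther from `y`
and has norm at most `1`; the triangle inequality for `infDist` then yields
`dist(y, C₃) ≤ dist(y, C₂) + δ(C₂, C₃)`. Taking suprema, and the same argument with `C₁` and
`C₃` exchanged, gives the claim.
-/

open Metric Pointwise

theorem exists_nonneg_smul_norm_le_dist_le {E : Type*} [NormedAddCommGroup E]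
    [InnerProductSpace ℝ E] (y z : E) :
    ∃ t : ℝ, 0 ≤ t ∧ ‖t • z‖ ≤ ‖y‖ ∧ dist y (t • z) ≤ dist y z := by
  rcases le_or_gt (inner ℝ y z) 0 with hyz | hyz
  · refine ⟨0, le_rfl, by simp, ?_⟩
    rw [zero_smul, dist_zero_right, dist_eq_norm, ← sq_le_sq₀ (norm_nonneg _) (norm_nonneg _),
      norm_sub_sq_real]
    nlinarith [sq_nonneg ‖z‖]
  · have hz : 0 < ‖z‖ := norm_pos_iff.2 (by rintro rfl; simp at hyz)
    -- `t • z` is the orthogonal projection of `y` onto the line through `z`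
    set t := inner ℝ y z / ‖z‖ ^ 2 with ht
    have ht0 : 0 ≤ t := by positivity
    have horth : inner ℝ (y - t • z) ((t - 1) • z) = 0 := by
      rw [real_inner_smul_right, inner_sub_left, real_inner_smul_left,
        real_inner_self_eq_norm_sq, ht, div_mul_cancel₀ _ (by positivity), sub_self, mul_zero]
    refine ⟨t, ht0, ?_, ?_⟩
    · rw [norm_smul, Real.norm_of_nonneg ht0]
      refine le_of_mul_le_mul_right ?_ hz
      calc t * ‖z‖ * ‖z‖ = inner ℝ y z := by rw [ht]; field_simp
        _ ≤ ‖y‖ * ‖z‖ := real_inner_le_norm y z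
    · have hsplit : y - z = (y - t • z) + (t - 1) • z := by module
      rw [dist_eq_norm, dist_eq_norm, ← sq_le_sq₀ (norm_nonneg _) (norm_nonneg _), hsplit,
        norm_add_sq_real, horth]
      linarith [sq_nonneg ‖(t - 1) • z‖]

section Cones

variable {m : ℕ}

local notation "𝔼" => EuclideanSpace ℝ (Fin m)

theorem IsCone.zero_mem_s1 {C : Set 𝔼} (hC : IsCone C) (hne : C.Nonempty) : (0 : 𝔼) ∈ C := by
  obtain ⟨x, hx⟩ := hne
  simpa using hC 0 le_rfl x hx

theorem IsCone.infDist_smul_le {C : Set 𝔼} (hC : IsCone C) (hne : C.Nonempty) {t : ℝ}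
    (ht : 0 ≤ t) (x : 𝔼) : infDist (t • x) C ≤ t * infDist x C := by
  rcases ht.eq_or_lt with rfl | ht
  · simp [infDist_zero_of_mem (hC.zero_mem_s1 hne)]
  calc infDist (t • x) C ≤ infDist (t • x) (t • C) :=
        infDist_le_infDist_of_subset (by rintro _ ⟨y, hy, rfl⟩; exact hC t ht.le y hy)
          (hne.image _)
    _ = t * infDist x C := by rw [infDist_smul₀ ht.ne', Real.norm_of_nonneg ht.le]

noncomputable def coneDev (C D : Set 𝔼) : ℝ :=
  ⨆ y : {y : 𝔼 // y ∈ C ∧ ‖y‖ = 1}, infDist (y : 𝔼) D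

theorem coneDev_nonneg (C D : Set 𝔼) : 0 ≤ coneDev C D :=
  Real.iSup_nonneg fun _ => infDist_nonneg

theorem coneDisc_eq_max_coneDev (C D : Set 𝔼) :
    coneDisc C D = max (coneDev C D) (coneDev D C) := rfl

theorem infDist_le_coneDev {C D : Set 𝔼} (hD : (0 : 𝔼) ∈ D) {y : 𝔼} (hy : y ∈ C)
    (hy1 : ‖y‖ = 1) : infDist y D ≤ coneDev C D := by
  refine le_ciSup (f := fun y : {y : 𝔼 // y ∈ C ∧ ‖y‖ = 1} => infDist (y : 𝔼) D)
    ⟨1, ?_⟩ ⟨y, hy, hy1⟩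
  rintro _ ⟨u, rfl⟩
  simpa [u.2.2] using infDist_le_dist_of_mem (x := (u : 𝔼)) hD

theorem infDist_le_norm_mul_coneDev {B C : Set 𝔼} (hB : IsCone B) (hC : IsCone C)
    (hCne : C.Nonempty) {z : 𝔼} (hz : z ∈ B) : infDist z C ≤ ‖z‖ * coneDev B C := by
  rcases eq_or_ne z 0 with rfl | hz0
  · simp [infDist_zero_of_mem (hC.zero_mem_s1 hCne)]
  have hn : 0 < ‖z‖ := norm_pos_iff.2 hz0
  set u := ‖z‖⁻¹ • z
  have hzu : z = ‖z‖ • u := by rw [smul_smul, mul_inv_cancel₀ hn.ne', one_smul]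
  have hu1 : ‖u‖ = 1 := by rw [norm_smul, norm_inv, norm_norm, inv_mul_cancel₀ hn.ne']
  calc infDist z C = infDist (‖z‖ • u) C := by rw [← hzu]
    _ ≤ ‖z‖ * infDist u C := hC.infDist_smul_le hCne hn.le u
    _ ≤ ‖z‖ * coneDev B C := by
        gcongr
        exact infDist_le_coneDev (hC.zero_mem_s1 hCne) (hB _ (by positivity) z hz) hu1

theorem infDist_le_infDist_add_norm_mul_coneDev {B C : Set 𝔼} (hB : IsCone B)
    (hBne : B.Nonempty) (hC : IsCone C) (hCne : C.Nonempty) (y : 𝔼) :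
    infDist y C ≤ infDist y B + ‖y‖ * coneDev B C := by
  rw [← sub_le_iff_le_add, le_infDist hBne]
  intro z hz
  obtain ⟨t, ht, htz, hdist⟩ := exists_nonneg_smul_norm_le_dist_le y z
  have htzB : t • z ∈ B := hB t ht z hz
  have hproj := infDist_le_norm_mul_coneDev hB hC hCne htzB
  calc infDist y C - ‖y‖ * coneDev B C
      ≤ infDist (t • z) C + dist y (t • z) - ‖t • z‖ * coneDev B C := by
        gcongr
        · exact infDist_le_infDist_add_dist
        · exact coneDev_nonneg B C
    _ ≤ dist y z := by linarith

theorem coneDev_le_add {A B C : Set 𝔼} (hB : IsCone B) (hBne : B.Nonempty) (hC : IsCone C)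
    (hCne : C.Nonempty) : coneDev A C ≤ coneDev A B + coneDev B C := by
  refine Real.iSup_le (fun ⟨y, hyA, hy1⟩ => ?_)
    (add_nonneg (coneDev_nonneg A B) (coneDev_nonneg B C))
  calc infDist y C ≤ infDist y B + ‖y‖ * coneDev B C :=
        infDist_le_infDist_add_norm_mul_coneDev hB hBne hC hCne y
    _ ≤ coneDev A B + coneDev B C := by
        rw [hy1, one_mul]
        gcongr
        exact infDist_le_coneDev (hB.zero_mem_s1 hBne) hyA hy1

end Cones

theorem stmt1 {m : ℕ} (C₁ C₂ C₃ : Set (EuclideanSpace ℝ (Fin m)))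
    (h₁ne : C₁.Nonempty) (h₂ne : C₂.Nonempty) (h₃ne : C₃.Nonempty)
    (h₁ : IsCone C₁) (h₂ : IsCone C₂) (h₃ : IsCone C₃) :
    coneDisc C₁ C₃ ≤ coneDisc C₁ C₂ + coneDisc C₂ C₃ := by
  simp only [coneDisc_eq_max_coneDev]
  refine max_le ?_ ?_
  · calc coneDev C₁ C₃ ≤ coneDev C₁ C₂ + coneDev C₂ C₃ := coneDev_le_add h₂ h₂ne h₃ h₃ne
      _ ≤ _ := add_le_add (le_max_left _ _) (le_max_left _ _)
  · calc coneDev C₃ C₁ ≤ coneDev C₂ C₁ + coneDev C₃ C₂ :=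
          add_comm (coneDev C₃ C₂) _ ▸ coneDev_le_add h₂ h₂ne h₁ h₁ne
      _ ≤ _ := add_le_add (le_max_right _ _) (le_max_right _ _)
end

section
/- Let σ be a finite Borel measure on the unit sphere S² ⊆ ℝ³ that assigns positive measure to every nonempty relatively open subset of S², and let ȳ : S² → ℝ^m be continuous. Define C₀ = { ∫_{S²} f(u)·ȳ(u) dσ(u) : f : S² → ℝ nonnegative and σ-integrable }. Then the closure of C₀ equals the closure of the conic hull of { ȳ(u) : u ∈ S² }. In particular, δ(C₀, conic hull of {ȳ(u) : u ∈ S²}) = 0. -/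
open MeasureTheory

/-- The unit sphere S² in ℝ³, as a subtype. -/
abbrev Sphere2 : Type := Metric.sphere (0 : EuclideanSpace ℝ (Fin 3)) 1

/-- The conic hull of a set `A`: all finite nonnegative combinations of elements of `A`. -/
def conicHull {m : ℕ} (A : Set (EuclideanSpace ℝ (Fin m))) : Set (EuclideanSpace ℝ (Fin m)) :=
  {y | ∃ (k : ℕ) (c : Fin k → ℝ) (a : Fin k → EuclideanSpace ℝ (Fin m)),
      (∀ i, 0 ≤ c i) ∧ (∀ i, a i ∈ A) ∧ y = ∑ i, c i • a i}

/-- The cone of images under nonnegative integrable illuminations. -/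
def imageCone {m : ℕ} (σ : Measure Sphere2) (ybar : Sphere2 → EuclideanSpace ℝ (Fin m)) :
    Set (EuclideanSpace ℝ (Fin m)) :=
  {y | ∃ f : Sphere2 → ℝ, (∀ u, 0 ≤ f u) ∧ Integrable f σ ∧ y = ∫ u, f u • ybar u ∂σ}

/-! Both closures are closed convex cones. Each integrand `f u • ybar u` lies in the cone generated
by the values of `ybar`, hence so does the integral, up to closure. Conversely, since `σ` charges
every nonempty open set, the averages of `ybar` over small neighbourhoods of `u` are images of
nonnegative densities, and they converge to `ybar u` by continuity; so every generator, and with it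
the whole conic hull, lies in the closure of the image cone. -/

open Set Metric

section ConeIntegral

variable {X E : Type*} [MeasurableSpace X] [NormedAddCommGroup E] [NormedSpace ℝ E]
  [CompleteSpace E]

theorem PointedCone.integral_mem {μ : Measure X} [IsFiniteMeasure μ] {K : PointedCone ℝ E}
    (hK : IsClosed (K : Set E)) {g : X → E} (hg : ∀ᵐ x ∂μ, g x ∈ K) : ∫ x, g x ∂μ ∈ K := by
  by_cases hgi : Integrable g μ
  swap
  · rw [integral_undef hgi]
    exact K.zero_mem
  rcases eq_zero_or_neZero μ with rfl | _
  · rw [integral_zero_measure]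
    exact K.zero_mem
  rw [← measure_smul_average]
  exact K.smul_mem measureReal_nonneg (K.convex.average_mem hK hg hgi)

theorem mem_closure_setAverage_of_continuousAt [TopologicalSpace X] [OpensMeasurableSpace X]
    {μ : Measure X} [IsFiniteMeasure μ] [μ.IsOpenPosMeasure] {g : X → E} (hg : Integrable g μ)
    {x₀ : X} (hx₀ : ContinuousAt g x₀) :
    g x₀ ∈ closure ((fun U => ⨍ x in U, g x ∂μ) '' {U | IsOpen U ∧ x₀ ∈ U}) := by
  refine Metric.mem_closure_iff.2 fun ε hε => ?_
  obtain ⟨U, hUg, hU, hx₀U⟩ :=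
    mem_nhds_iff.1 (hx₀ (closedBall_mem_nhds (g x₀) (half_pos hε)))
  have hmem : ⨍ x in U, g x ∂μ ∈ closedBall (g x₀) (ε / 2) :=
    (convex_closedBall _ _).set_average_mem isClosed_closedBall
      (hU.measure_ne_zero μ ⟨x₀, hx₀U⟩) (measure_ne_top μ U)
      (ae_restrict_of_forall_mem hU.measurableSet hUg) hg.integrableOn
  exact ⟨_, ⟨U, ⟨hU, hx₀U⟩, rfl⟩, (mem_closedBall'.1 hmem).trans_lt (half_lt_self hε)⟩

end ConeIntegral

section EuclideanCones

variable {m : ℕ} (σ : Measure Sphere2) [IsFiniteMeasure σ]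
  {ybar : Sphere2 → EuclideanSpace ℝ (Fin m)}

theorem conicHull_eq_hull (A : Set (EuclideanSpace ℝ (Fin m))) :
    conicHull A = PointedCone.hull ℝ A := by
  ext y
  rw [SetLike.mem_coe, Submodule.mem_span_set']
  constructor
  · rintro ⟨k, c, a, hc, ha, rfl⟩
    exact ⟨k, fun i => ⟨c i, hc i⟩, fun i => ⟨a i, ha i⟩, rfl⟩
  · rintro ⟨k, c, a, rfl⟩
    exact ⟨k, fun i => c i, fun i => a i, fun i => (c i).2, fun i => (a i).2, rfl⟩

theorem coneDisc_eq_zero_of_closure_eq {C Chat : Set (EuclideanSpace ℝ (Fin m))}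
    (h : closure C = closure Chat) : coneDisc C Chat = 0 := by
  have hdist : ∀ {S T : Set (EuclideanSpace ℝ (Fin m))}, closure S = closure T →
      ∀ y ∈ S, infDist y T = 0 := fun hST y hy => by
    rw [← infDist_closure, ← hST]
    exact infDist_zero_of_mem (subset_closure hy)
  have hC : ∀ y : {y // y ∈ C ∧ ‖y‖ = 1}, infDist (y : EuclideanSpace ℝ (Fin m)) Chat = 0 :=
    fun y => hdist h y y.2.1
  have hChat : ∀ y : {y // y ∈ Chat ∧ ‖y‖ = 1}, infDist (y : EuclideanSpace ℝ (Fin m)) C = 0 :=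
    fun y => hdist h.symm y y.2.1
  simp only [coneDisc, hC, hChat, Real.iSup_const_zero, max_self]

noncomputable def imagePointedCone (hy : Continuous ybar) :
    PointedCone ℝ (EuclideanSpace ℝ (Fin m)) where
  carrier := imageCone σ ybar
  zero_mem' := ⟨0, fun _ => le_rfl, integrable_zero _ _ _, by simp⟩
  add_mem' := by
    rintro _ _ ⟨f, hf₀, hf, rfl⟩ ⟨g, hg₀, hg, rfl⟩
    have hybar : MemLp ybar ⊤ σ := hy.memLp_top_of_hasCompactSupport (.of_compactSpace ybar) σ
    refine ⟨f + g, fun u => add_nonneg (hf₀ u) (hg₀ u), hf.add hg, ?_⟩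
    simp only [Pi.add_apply, add_smul]
    exact (integral_add (hf.smul_of_top_left hybar) (hg.smul_of_top_left hybar)).symm
  smul_mem' := by
    rintro c _ ⟨f, hf₀, hf, rfl⟩
    refine ⟨fun u => c * f u, fun u => mul_nonneg c.2 (hf₀ u), hf.const_mul c, ?_⟩
    simp only [mul_smul]
    exact (integral_smul (c : ℝ) _).symm

theorem setAverage_mem_imageCone {s : Set Sphere2} (hs : MeasurableSet s) :
    ⨍ u in s, ybar u ∂σ ∈ imageCone σ ybar := by
  refine ⟨s.indicator fun _ => (σ.real s)⁻¹, indicator_nonneg fun _ _ => inv_nonneg.2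
    measureReal_nonneg, (integrable_const _).indicator hs, ?_⟩
  rw [setAverage_eq, ← integral_smul, ← integral_indicator hs]
  congr 1 with u
  by_cases hu : u ∈ s <;> simp [hu]

theorem imageCone_subset_closure_conicHull :
    imageCone σ ybar ⊆ closure (conicHull (range ybar)) := by
  rintro _ ⟨f, hf₀, -, rfl⟩
  rw [conicHull_eq_hull, ← PointedCone.coe_closure]
  exact PointedCone.integral_mem isClosed_closure <| .of_forall fun u => subset_closure <|
    (PointedCone.hull ℝ _).smul_mem (hf₀ u) (PointedCone.subset_hull ⟨u, rfl⟩)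

theorem conicHull_subset_closure_imageCone [σ.IsOpenPosMeasure] (hy : Continuous ybar) :
    conicHull (range ybar) ⊆ closure (imageCone σ ybar) := by
  rw [conicHull_eq_hull]
  refine SetLike.coe_subset_coe.2 ((Submodule.span_le (p := (imagePointedCone σ hy).closure)).2 ?_)
  rintro _ ⟨u, rfl⟩
  have hint : Integrable ybar σ := hy.integrable_of_hasCompactSupport (.of_compactSpace ybar)
  refine closure_mono ?_ (mem_closure_setAverage_of_continuousAt hint hy.continuousAt)
  rintro _ ⟨U, ⟨hU, -⟩, rfl⟩
  exact setAverage_mem_imageCone σ hU.measurableSet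

end EuclideanCones

theorem stmt3 {m : ℕ} (σ : Measure Sphere2) [IsFiniteMeasure σ]
    (hσ : ∀ U : Set Sphere2, IsOpen U → U.Nonempty → 0 < σ U)
    (ybar : Sphere2 → EuclideanSpace ℝ (Fin m)) (hy : Continuous ybar) :
    closure (imageCone σ ybar) = closure (conicHull (Set.range ybar)) ∧
    coneDisc (imageCone σ ybar) (conicHull (Set.range ybar)) = 0 := by
  have : σ.IsOpenPosMeasure := ⟨fun U hU hne => (hσ U hU hne).ne'⟩
  have hcl : closure (imageCone σ ybar) = closure (conicHull (range ybar)) :=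
    (closure_minimal (imageCone_subset_closure_conicHull σ) isClosed_closure).antisymm
      (closure_minimal (conicHull_subset_closure_imageCone σ hy) isClosed_closure)
  exact ⟨hcl, coneDisc_eq_zero_of_closure_eq hcl⟩
end

section
/- Let (O; Δ₁,…,Δ_N; n₁,…,n_N) be a triangulated object in ℝ³ and let ρ : ∂O → (0,1] be strictly positive. Then for every u ∈ S², the shadowed region S[u] = {x ∈ ∂O : D̄[u](x) = 0} is a closed subset of ℝ³ (equivalently, S[u] is relatively closed in ∂O). -/
open MeasureTheory
open scoped Classical
open scoped RealInnerProductSpace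

/-- A point in ℝ³ (Euclidean). -/
abbrev E3 : Type := EuclideanSpace ℝ (Fin 3)

/-- A triangulated object: a compact set `O ⊆ ℝ³` whose topological boundary is the union of
`N` triangles (each the convex hull of three affinely independent points), where two distinct
triangles intersect in the empty set, a common vertex, or a common edge, and each face carries
a unit normal orthogonal to the face. -/
structure TriangulatedObject (N : ℕ) where
  carrier : Set E3
  isCompact : IsCompact carrier
  v : Fin N → Fin 3 → E3
  indep : ∀ i, AffineIndependent ℝ (v i)
  normal : Fin N → E3
  normal_unit : ∀ i, ‖normal i‖ = 1
  normal_orth : ∀ i k₁ k₂, (inner ℝ (normal i) (v i k₁ - v i k₂) : ℝ) = 0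
  boundary_eq : frontier carrier = ⋃ i, convexHull ℝ (Set.range (v i))
  faces_inter : ∀ i j, i ≠ j →
    convexHull ℝ (Set.range (v i)) ∩ convexHull ℝ (Set.range (v j)) = ∅ ∨
    (∃ k₁ k₂, v i k₁ = v j k₂ ∧
      convexHull ℝ (Set.range (v i)) ∩ convexHull ℝ (Set.range (v j)) = {v i k₁}) ∨
    (∃ k₁ k₁' k₂ k₂', k₁ ≠ k₁' ∧ v i k₁ = v j k₂ ∧ v i k₁' = v j k₂' ∧
      convexHull ℝ (Set.range (v i)) ∩ convexHull ℝ (Set.range (v j))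
        = segment ℝ (v i k₁) (v i k₁'))

namespace TriangulatedObject

variable {N : ℕ}

/-- The `i`-th face Δᵢ. -/
def face (T : TriangulatedObject N) (i : Fin N) : Set E3 :=
  convexHull ℝ (Set.range (T.v i))

/-- The set `E` of edge points: union of all edges of all faces. -/
def edges (T : TriangulatedObject N) : Set E3 :=
  ⋃ i, ⋃ k₁, ⋃ k₂, ⋃ (_ : k₁ ≠ k₂), segment ℝ (T.v i k₁) (T.v i k₂)

/-- The boundary ∂O of the object. -/
def bdry (T : TriangulatedObject N) : Set E3 := frontier T.carrier

/-- The set Φ = ∂O \ E of face-interior points. -/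
def Phi (T : TriangulatedObject N) : Set E3 := T.bdry \ T.edges

/-- The outward normal at a boundary point: the normal of (the) face containing `x`
(for `x ∈ Φ` this face is unique); junk value `0` off the faces. -/
noncomputable def normalAt (T : TriangulatedObject N) (x : E3) : E3 :=
  if h : ∃ i, x ∈ T.face i then T.normal h.choose else 0

/-- The point-direction visibility indicator ν(x,u): 1 if the ray from `x` in direction `u`
meets `O` only at `x`, else 0. -/
noncomputable def vis (T : TriangulatedObject N) (x u : E3) : ℝ :=
  if {p : E3 | ∃ t : ℝ, 0 ≤ t ∧ p = x + t • u} ∩ T.carrier = {x} then 1 else 0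

/-- The direct point-illumination irradiance D̄[u](x) = ρ(x)·⟨n(x),u⟩₊·ν(x,u) on Φ, 0 on E. -/
noncomputable def Dbar (T : TriangulatedObject N) (ρ : E3 → ℝ) (u x : E3) : ℝ :=
  if x ∈ T.Phi then ρ x * max (inner ℝ (T.normalAt x) u : ℝ) 0 * T.vis x u else 0

/-- The shadowed region S[u] ⊆ ∂O. -/
def shadow (T : TriangulatedObject N) (ρ : E3 → ℝ) (u : E3) : Set E3 :=
  {x ∈ T.bdry | T.Dbar ρ u x = 0}

end TriangulatedObject

/-! A lit point `x` lies in the relative interior of a face `Δᵢ` with `⟪nᵢ, u⟫ > 0`, and the ray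
beyond `x` misses `O`. Near `x` the boundary `∂O` is contained in the plane of `Δᵢ`, so the open
half-ball above that plane is a connected set avoiding `∂O`; it contains points of the ray of `x`,
hence misses `O` altogether. For boundary points `y` near `x`, the initial piece of the ray from
`y` runs inside that half-ball, and the rest stays close to the ray of `x`, which misses `O` by
compactness (the set of points whose ray tail meets `O` is `O` minus a closed half-line, a closed
set). So the lit points form a relatively open subset of `∂O`. -/

open Set Filter Topology Metric

theorem IsPreconnected.disjoint_of_disjoint_frontier {X : Type*} [TopologicalSpace X]
    {s O : Set X} (hs : IsPreconnected s) (hsO : Disjoint s (frontier O))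
    (hout : (s \ O).Nonempty) : Disjoint s O := by
  have hcover : s ⊆ interior O ∪ (closure O)ᶜ := fun y hy => by
    by_cases h : y ∈ interior O
    · exact Or.inl h
    · exact Or.inr fun hc => hsO.notMem_of_mem_left hy ⟨hc, h⟩
  rcases hs.subset_or_subset isOpen_interior isClosed_closure.isOpen_compl
      (disjoint_compl_right.mono_left interior_subset_closure) hcover with h | h
  · obtain ⟨y, hys, hyO⟩ := hout
    exact absurd (interior_subset (h hys)) hyO
  · exact disjoint_left.2 fun y hy hyO => h hy (subset_closure hyO)

theorem IsCompact.isClosed_setOf_exists_add_smul_mem {E : Type*} [NormedAddCommGroup E]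
    [NormedSpace ℝ E] {O : Set E} (hO : IsCompact O) (u : E) (s : ℝ) :
    IsClosed {y | ∃ t ≥ s, y + t • u ∈ O} := by
  have hray : IsClosed ((fun t : ℝ => t • u) '' Iic (-s)) := isClosedMap_smul_left u _ isClosed_Iic
  convert hray.add_left_of_isCompact hO using 1
  ext y
  simp only [mem_ofPred_eq, Set.mem_add, mem_image, mem_Iic]
  constructor
  · rintro ⟨t, ht, hyt⟩
    exact ⟨_, hyt, _, ⟨-t, neg_le_neg ht, rfl⟩, by rw [neg_smul, add_neg_cancel_right]⟩
  · rintro ⟨o, ho, _, ⟨t, ht, rfl⟩, rfl⟩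
    exact ⟨-t, le_neg_of_le_neg ht, by rwa [neg_smul, add_neg_cancel_right]⟩

theorem eventually_forall_add_smul_notMem {E : Type*} [NormedAddCommGroup E]
    [InnerProductSpace ℝ E] {O : Set E} (hO : IsCompact O) {x n u : E} (hnu : 0 < ⟪n, u⟫)
    (hfr : ∀ᶠ y in 𝓝 x, y ∈ frontier O → ⟪n, y⟫ = ⟪n, x⟫) (hx : ∀ t : ℝ, 0 < t → x + t • u ∉ O) :
    ∀ᶠ y in 𝓝 x, ⟪n, y⟫ = ⟪n, x⟫ → ∀ t : ℝ, 0 < t → y + t • u ∉ O := by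
  obtain ⟨r, hr, hfr⟩ := Metric.eventually_nhds_iff.1 hfr
  have hu : 0 < ‖u‖ := norm_pos_iff.2 fun hu => by simp [hu] at hnu
  set s := r / (2 * ‖u‖)
  have hs : 0 < s := by positivity
  set B := ball x r ∩ {y | ⟪n, x⟫ < ⟪n, y⟫}
  have hshort : ∀ y ∈ ball x (r / 2), ⟪n, y⟫ = ⟪n, x⟫ → ∀ t > 0, t ≤ s → y + t • u ∈ B := by
    intro y hy hyn t ht hts
    refine ⟨?_, ?_⟩
    · have htu : t * ‖u‖ ≤ r / 2 := by
        calc t * ‖u‖ ≤ s * ‖u‖ := by gcongr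
        _ = r / 2 := by rw [div_mul_eq_mul_div, mul_div_mul_right _ _ hu.ne']
      calc dist (y + t • u) x ≤ dist (y + t • u) y + dist y x := dist_triangle _ _ _
      _ < r / 2 + r / 2 := by
          rw [dist_self_add_left, norm_smul, Real.norm_of_nonneg ht.le]
          exact add_lt_add_of_le_of_lt htu hy
      _ = r := add_halves r
    · rw [mem_ofPred_eq, inner_add_right, real_inner_smul_right, hyn]
      exact lt_add_of_pos_right _ (mul_pos ht hnu)
  have hB : Disjoint B O := by
    have hconv : Convex ℝ B :=
      (convex_ball x r).inter (convex_halfSpace_gt (innerₛₗ ℝ n).isLinear _)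
    refine hconv.isPreconnected.disjoint_of_disjoint_frontier
      (disjoint_left.2 fun y ⟨hyr, hyn⟩ hyf => hyn.ne (hfr hyr hyf).symm)
      ⟨x + s • u, hshort x (mem_ball_self (half_pos hr)) rfl s hs le_rfl, hx s hs⟩
  have htail : {y | ∃ t ≥ s, y + t • u ∈ O}ᶜ ∈ 𝓝 x :=
    (hO.isClosed_setOf_exists_add_smul_mem u s).isOpen_compl.mem_nhds
      fun ⟨t, ht, h⟩ => hx t (hs.trans_le ht) h
  filter_upwards [ball_mem_nhds x (half_pos hr), htail] with y hy hytail hyn t ht hyt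
  rcases le_or_gt t s with hts | hst
  · exact hB.notMem_of_mem_left (hshort y hy hyn t ht hts) hyt
  · exact hytail ⟨t, hst.le, hyt⟩

namespace TriangulatedObject

variable {N : ℕ} (T : TriangulatedObject N)

theorem isClosed_face (i : Fin N) : IsClosed (T.face i) :=
  ((finite_range _).isCompact_convexHull ℝ).isClosed

theorem isClosed_edges : IsClosed T.edges := by
  refine isClosed_iUnion_of_finite fun i => isClosed_iUnion_of_finite fun k₁ =>
    isClosed_iUnion_of_finite fun k₂ => isClosed_iUnion_of_finite fun _ => ?_
  rw [← convexHull_pair]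
  exact ((toFinite _).isCompact_convexHull ℝ).isClosed

theorem segment_subset_edges (i : Fin N) {k k' : Fin 3} (hk : k ≠ k') :
    segment ℝ (T.v i k) (T.v i k') ⊆ T.edges := fun _ hx =>
  mem_iUnion.2 ⟨i, mem_iUnion.2 ⟨k, mem_iUnion.2 ⟨k', mem_iUnion.2 ⟨hk, hx⟩⟩⟩⟩

theorem vertex_mem_edges (i : Fin N) (k : Fin 3) : T.v i k ∈ T.edges := by
  obtain ⟨k', hk'⟩ := exists_ne k
  exact T.segment_subset_edges i hk'.symm (left_mem_segment ℝ _ _)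

theorem eq_of_mem_face_of_notMem_edges {x : E3} {i j : Fin N} (hx : x ∉ T.edges)
    (hi : x ∈ T.face i) (hj : x ∈ T.face j) : i = j := by
  by_contra hne
  have hmem : x ∈ T.face i ∩ T.face j := ⟨hi, hj⟩
  rcases T.faces_inter i j hne with h | ⟨k₁, -, -, h⟩ | ⟨k₁, k₁', -, -, hk, -, -, h⟩ <;>
    rw [face, face, h] at hmem
  · exact hmem
  · exact hx (hmem ▸ T.vertex_mem_edges i k₁)
  · exact hx (T.segment_subset_edges i hk hmem)

theorem exists_mem_face {x : E3} (hx : x ∈ T.bdry) : ∃ i, x ∈ T.face i :=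
  mem_iUnion.1 (T.boundary_eq ▸ hx)

theorem normalAt_eq {x : E3} {i : Fin N} (hx : x ∉ T.edges) (hi : x ∈ T.face i) :
    T.normalAt x = T.normal i := by
  have h : ∃ j, x ∈ T.face j := ⟨i, hi⟩
  rw [normalAt, dif_pos h]
  exact congrArg T.normal (T.eq_of_mem_face_of_notMem_edges hx h.choose_spec hi)

theorem inner_normal_eq_of_mem_face {i : Fin N} {y z : E3} (hy : y ∈ T.face i)
    (hz : z ∈ T.face i) : ⟪T.normal i, y⟫ = ⟪T.normal i, z⟫ := by
  have hplane : T.face i ⊆ {w | ⟪T.normal i, w⟫ = ⟪T.normal i, T.v i 0⟫} := by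
    refine convexHull_min ?_ (convex_hyperplane (innerₛₗ ℝ (T.normal i)).isLinear _)
    rintro _ ⟨k, rfl⟩
    have h := T.normal_orth i k 0
    rw [inner_sub_right, sub_eq_zero] at h
    exact h
  exact (hplane hy).trans (hplane hz).symm

theorem eventually_mem_face_of_notMem_edges {x : E3} {i : Fin N} (hx : x ∉ T.edges)
    (hi : x ∈ T.face i) : ∀ᶠ y in 𝓝 x, y ∈ T.bdry → y ∈ T.face i ∧ y ∉ T.edges := by
  have hother : ∀ᶠ y in 𝓝 x, ∀ j, y ∈ T.face j → j = i := by
    refine eventually_all.2 fun j => ?_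
    by_cases hji : j = i
    · exact Eventually.of_forall fun _ _ => hji
    · filter_upwards [(T.isClosed_face j).isOpen_compl.mem_nhds
        fun hj => hji (T.eq_of_mem_face_of_notMem_edges hx hj hi)] with y hy hyj
      exact absurd hyj hy
  filter_upwards [hother, T.isClosed_edges.isOpen_compl.mem_nhds hx] with y hy hyE hyb
  obtain ⟨j, hj⟩ := T.exists_mem_face hyb
  exact ⟨hy j hj ▸ hj, hyE⟩

theorem forall_add_smul_notMem_of_vis_ne_zero {x u : E3} (hu : u ≠ 0) (h : T.vis x u ≠ 0) :
    ∀ t : ℝ, 0 < t → x + t • u ∉ T.carrier := by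
  intro t ht hxt
  have hray : {p : E3 | ∃ t : ℝ, 0 ≤ t ∧ p = x + t • u} ∩ T.carrier = {x} := by
    by_contra hray
    exact h (if_neg hray)
  have : x + t • u = x := hray.subset ⟨⟨t, ht.le, rfl⟩, hxt⟩
  exact smul_ne_zero ht.ne' hu (by simpa using this)

theorem vis_eq_one {x u : E3} (hx : x ∈ T.carrier)
    (h : ∀ t : ℝ, 0 < t → x + t • u ∉ T.carrier) : T.vis x u = 1 := by
  refine if_pos (subset_antisymm ?_ ?_)
  · rintro _ ⟨⟨t, ht, rfl⟩, hxt⟩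
    rcases ht.eq_or_lt with rfl | ht
    · simp
    · exact absurd hxt (h t ht)
  · rintro _ rfl
    exact ⟨⟨0, le_rfl, by simp⟩, hx⟩

theorem Dbar_ne_zero_iff {ρ : E3 → ℝ} {u x : E3} (hρ : ρ x ≠ 0) :
    T.Dbar ρ u x ≠ 0 ↔ x ∈ T.Phi ∧ 0 < ⟪T.normalAt x, u⟫ ∧ T.vis x u ≠ 0 := by
  unfold Dbar
  split_ifs with hx <;> simp [hx, hρ]

theorem eventually_Dbar_ne_zero {ρ : E3 → ℝ} (hρ : ∀ y ∈ T.bdry, ρ y ≠ 0) {u x : E3}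
    (hx : x ∈ T.bdry) (hlit : T.Dbar ρ u x ≠ 0) :
    ∀ᶠ y in 𝓝 x, y ∈ T.bdry → T.Dbar ρ u y ≠ 0 := by
  obtain ⟨⟨-, hxE⟩, hnu, hvis⟩ := (T.Dbar_ne_zero_iff (hρ x hx)).1 hlit
  obtain ⟨i, hi⟩ := T.exists_mem_face hx
  rw [T.normalAt_eq hxE hi] at hnu
  have hu : u ≠ 0 := by rintro rfl; simp at hnu
  have hloc := T.eventually_mem_face_of_notMem_edges hxE hi
  have hfr : ∀ᶠ y in 𝓝 x, y ∈ frontier T.carrier → ⟪T.normal i, y⟫ = ⟪T.normal i, x⟫ := by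
    filter_upwards [hloc] with y hy hyb
    exact T.inner_normal_eq_of_mem_face (hy hyb).1 hi
  filter_upwards [hloc, eventually_forall_add_smul_notMem T.isCompact hnu hfr
    (T.forall_add_smul_notMem_of_vis_ne_zero hu hvis)] with y hy hray hyb
  obtain ⟨hyi, hyE⟩ := hy hyb
  refine (T.Dbar_ne_zero_iff (hρ y hyb)).2 ⟨⟨hyb, hyE⟩, ?_, ?_⟩
  · rwa [T.normalAt_eq hyE hyi]
  · rw [T.vis_eq_one (T.isCompact.isClosed.frontier_subset hyb)
      (hray (T.inner_normal_eq_of_mem_face hyi hi))]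
    exact one_ne_zero

end TriangulatedObject

theorem stmt7_general {N : ℕ} (T : TriangulatedObject N) (ρ : E3 → ℝ)
    (hρ : ∀ x ∈ T.bdry, 0 < ρ x ∧ ρ x ≤ 1)
    (u : E3) :
    IsClosed (T.shadow ρ u) := by
  refine isOpen_compl_iff.1 (isOpen_iff_mem_nhds.2 fun x hx => ?_)
  by_cases hxb : x ∈ T.bdry
  · have hlit : T.Dbar ρ u x ≠ 0 := fun h => hx ⟨hxb, h⟩
    filter_upwards [T.eventually_Dbar_ne_zero (fun y hy => (hρ y hy).1.ne') hxb hlit]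
      with y hy hys using hy hys.1 hys.2
  · filter_upwards [isClosed_frontier.isOpen_compl.mem_nhds hxb] with y hy hys using hy hys.1

theorem stmt7 {N : ℕ} (T : TriangulatedObject N) (ρ : E3 → ℝ)
    (hρ : ∀ x ∈ T.bdry, 0 < ρ x ∧ ρ x ≤ 1)
    (u : E3) (hu : ‖u‖ = 1) :
    IsClosed (T.shadow ρ u) :=
  stmt7_general T ρ hρ u
end

section
/- Let n ≥ 2 and let u, v ∈ ℝⁿ satisfy ⟨u,v⟩ ≠ 0. Then the ℓ²→ℓ² operator norm of the linear map x ↦ x − u·⟨v,x⟩/⟨u,v⟩ (i.e., the matrix I − u vᵀ/(uᵀv)) equals ‖u‖₂·‖v‖₂/|⟨u,v⟩|, and the operator norm of the linear map x ↦ u·⟨v,x⟩/⟨u,v⟩ (i.e., u vᵀ/(uᵀv)) also equals ‖u‖₂·‖v‖₂/|⟨u,v⟩|. -/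
/-!
Write `c = ⟪u, v⟫`. The first operator sends `x` to `c⁻¹ • (c • x - ⟪v, x⟫ • u)`, and
`‖u‖²‖v‖²‖x‖² - ‖c • x - ⟪v, x⟫ • u‖² = det (gram u v x) + ‖v‖²⟪u, x⟫²`,
so positive semidefiniteness of the Gram matrix gives the upper bound `‖u‖‖v‖/|c|`.
It is attained at `x = ‖u‖² • v - c • u`, which is orthogonal to `u`; if that vector
vanishes then `u` and `v` are parallel, `|c| = ‖u‖‖v‖`, and any nonzero `x ⊥ u` (which
exists as `n ≥ 2`) is fixed by the operator. The second operator is rank one and its norm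
is read off directly.
-/

open scoped RealInnerProductSpace

variable {E : Type*} [NormedAddCommGroup E] [InnerProductSpace ℝ E]

theorem gram_det_fin_three_nonneg (u v x : E) :
    0 ≤ ‖u‖ ^ 2 * ‖v‖ ^ 2 * ‖x‖ ^ 2 + 2 * ⟪u, v⟫ * ⟪v, x⟫ * ⟪u, x⟫
      - ‖u‖ ^ 2 * ⟪v, x⟫ ^ 2 - ‖v‖ ^ 2 * ⟪u, x⟫ ^ 2 - ‖x‖ ^ 2 * ⟪u, v⟫ ^ 2 := by
  have h := (Matrix.posSemidef_gram ℝ ![u, v, x]).det_nonneg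
  rw [Matrix.det_fin_three] at h
  simp only [Matrix.gram_apply, Matrix.cons_val_zero, Matrix.cons_val_one, Matrix.cons_val_two,
    real_inner_self_eq_norm_sq, Matrix.head_cons, Matrix.tail_cons, real_inner_comm u,
    real_inner_comm v x] at h
  linarith

theorem norm_inner_smul_sub_inner_smul_sq (u v x : E) :
    ‖⟪u, v⟫ • x - ⟪v, x⟫ • u‖ ^ 2
      = ⟪u, v⟫ ^ 2 * ‖x‖ ^ 2 - 2 * ⟪u, v⟫ * ⟪v, x⟫ * ⟪u, x⟫ + ⟪v, x⟫ ^ 2 * ‖u‖ ^ 2 := by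
  rw [norm_sub_sq_real, norm_smul, norm_smul, inner_smul_left, inner_smul_right,
    real_inner_comm x u]
  simp only [Real.norm_eq_abs, mul_pow, sq_abs, conj_trivial]
  ring

theorem norm_inner_smul_sub_inner_smul_le (u v x : E) :
    ‖⟪u, v⟫ • x - ⟪v, x⟫ • u‖ ≤ ‖u‖ * ‖v‖ * ‖x‖ := by
  rw [← pow_le_pow_iff_left₀ (norm_nonneg _) (by positivity) two_ne_zero,
    norm_inner_smul_sub_inner_smul_sq]
  linarith [gram_det_fin_three_nonneg u v x, mul_nonneg (sq_nonneg ‖v‖) (sq_nonneg ⟪u, x⟫)]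

theorem exists_norm_inner_smul_sub_inner_smul_eq (u v : E) (hu : (ℝ ∙ u)ᗮ ≠ ⊥) :
    ∃ x ≠ 0, ‖⟪u, v⟫ • x - ⟪v, x⟫ • u‖ = ‖u‖ * ‖v‖ * ‖x‖ := by
  by_cases hx₀ : ‖u‖ ^ 2 • v - ⟪u, v⟫ • u = 0
  · obtain ⟨x, hxu, hx⟩ := Submodule.exists_mem_ne_zero_of_ne_bot hu
    refine ⟨x, hx, ?_⟩
    rcases eq_or_ne u 0 with rfl | hu
    · simp
    have hu : 0 < ‖u‖ := norm_pos_iff.2 hu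
    have hux : ⟪u, x⟫ = 0 := Submodule.mem_orthogonal_singleton_iff_inner_right.1 hxu
    have hvx : ⟪v, x⟫ = 0 := by
      have := congrArg (⟪·, x⟫) hx₀
      simp only [inner_sub_left, real_inner_smul_left, hux, inner_zero_left, mul_zero,
        sub_zero] at this
      exact (mul_eq_zero.1 this).resolve_left (by positivity)
    have hnorm : ‖u‖ * ‖v‖ = |⟪u, v⟫| := by
      have := congrArg norm (sub_eq_zero.1 hx₀)
      rw [norm_smul, norm_smul, Real.norm_eq_abs, Real.norm_eq_abs, abs_sq, sq, mul_assoc,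
        mul_comm |_|] at this
      exact mul_left_cancel₀ hu.ne' this
    rw [hvx, zero_smul, sub_zero, norm_smul, Real.norm_eq_abs, hnorm]
  · refine ⟨_, hx₀, ?_⟩
    set c := ⟪u, v⟫ with hc
    have hux : ⟪u, ‖u‖ ^ 2 • v - c • u⟫ = 0 := by
      rw [inner_sub_right, real_inner_smul_right, real_inner_smul_right,
        real_inner_self_eq_norm_sq]
      ring
    have hvx : ⟪v, ‖u‖ ^ 2 • v - c • u⟫ = ‖u‖ ^ 2 * ‖v‖ ^ 2 - c ^ 2 := by
      rw [inner_sub_right, real_inner_smul_right, real_inner_smul_right,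
        real_inner_self_eq_norm_sq, real_inner_comm, ← hc]
      ring
    have hx : ‖‖u‖ ^ 2 • v - c • u‖ ^ 2 = ‖u‖ ^ 2 * (‖u‖ ^ 2 * ‖v‖ ^ 2 - c ^ 2) := by
      rw [← real_inner_self_eq_norm_sq, inner_sub_left, real_inner_smul_left, real_inner_smul_left,
        hux, hvx]
      ring
    rw [← pow_left_inj₀ (norm_nonneg _) (by positivity) two_ne_zero,
      norm_inner_smul_sub_inner_smul_sq, hux, hvx, mul_pow, mul_pow, hx]
    ring

theorem id_sub_inv_inner_smul_smulRight_apply {u v : E} (huv : ⟪u, v⟫ ≠ 0) (x : E) :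
    (ContinuousLinearMap.id ℝ E - ⟪u, v⟫⁻¹ • (innerSL ℝ v).smulRight u) x
      = ⟪u, v⟫⁻¹ • (⟪u, v⟫ • x - ⟪v, x⟫ • u) := by
  simp [smul_sub, smul_smul, inv_mul_cancel₀ huv]

theorem norm_id_sub_inv_inner_smul_smulRight {u v : E} (huv : ⟪u, v⟫ ≠ 0)
    (hu : (ℝ ∙ u)ᗮ ≠ ⊥) :
    ‖ContinuousLinearMap.id ℝ E - ⟪u, v⟫⁻¹ • (innerSL ℝ v).smulRight u‖
      = ‖u‖ * ‖v‖ / |⟪u, v⟫| := by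
  set T := ContinuousLinearMap.id ℝ E - ⟪u, v⟫⁻¹ • (innerSL ℝ v).smulRight u
  have hT (x : E) : ‖T x‖ = ‖⟪u, v⟫ • x - ⟪v, x⟫ • u‖ / |⟪u, v⟫| := by
    rw [id_sub_inv_inner_smul_smulRight_apply huv, norm_smul, norm_inv, Real.norm_eq_abs,
      inv_mul_eq_div]
  have hc : 0 < |⟪u, v⟫| := abs_pos.2 huv
  apply le_antisymm
  · refine T.opNorm_le_bound (by positivity) fun x ↦ ?_
    rw [hT, div_mul_eq_mul_div]
    gcongr
    exact norm_inner_smul_sub_inner_smul_le u v x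
  · obtain ⟨x, hx, hTx⟩ := exists_norm_inner_smul_sub_inner_smul_eq u v hu
    have := T.le_opNorm x
    rw [hT, hTx, mul_div_right_comm] at this
    exact le_of_mul_le_mul_right this (norm_pos_iff.2 hx)

theorem norm_inv_inner_smul_smulRight (u v : E) :
    ‖⟪u, v⟫⁻¹ • (innerSL ℝ v).smulRight u‖ = ‖u‖ * ‖v‖ / |⟪u, v⟫| := by
  rw [norm_smul, ContinuousLinearMap.norm_smulRight_apply, innerSL_apply_norm, norm_inv,
    Real.norm_eq_abs, inv_mul_eq_div, mul_comm ‖v‖]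

theorem Submodule.orthogonal_span_singleton_ne_bot {𝕜 F : Type*} [RCLike 𝕜]
    [NormedAddCommGroup F] [InnerProductSpace 𝕜 F] [FiniteDimensional 𝕜 F]
    (hF : 2 ≤ Module.finrank 𝕜 F) (u : F) : (𝕜 ∙ u)ᗮ ≠ ⊥ := by
  intro h
  have hsum := (𝕜 ∙ u).finrank_add_finrank_orthogonal
  rw [h, finrank_bot, add_zero] at hsum
  have := finrank_span_le_card (R := 𝕜) ({u} : Set F)
  simp only [Set.toFinset_singleton, Finset.card_singleton] at this
  omega

theorem stmt12 {n : ℕ} (hn : 2 ≤ n) (u v : EuclideanSpace ℝ (Fin n))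
    (huv : (inner ℝ u v : ℝ) ≠ 0) :
    ‖ContinuousLinearMap.id ℝ (EuclideanSpace ℝ (Fin n))
        - (inner ℝ u v : ℝ)⁻¹ • ((innerSL ℝ v).smulRight u)‖
      = ‖u‖ * ‖v‖ / |(inner ℝ u v : ℝ)| ∧
    ‖(inner ℝ u v : ℝ)⁻¹ • ((innerSL ℝ v).smulRight u)‖
      = ‖u‖ * ‖v‖ / |(inner ℝ u v : ℝ)| :=
  ⟨norm_id_sub_inv_inner_smul_smulRight huv <|
      Submodule.orthogonal_span_singleton_ne_bot (by rwa [finrank_euclideanSpace_fin]) u,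
    norm_inv_inner_smul_smulRight u v⟩
end

section
/- Let Ā, Â ∈ ℝ^{m×n}, let γ > 0, and let 0 ≤ γ' ≤ γ/(γ+1). Suppose that for every x ∈ ℝⁿ with all entries nonnegative and ‖Āx‖₂ ≤ 1, one has ‖Āx − Âx‖₂ ≤ γ'. Then δ(cone(Ā), cone(Â)) ≤ γ. -/
/-!
A unit vector `Āx` of `cone Ā` is within `γ' ≤ γ` of `Âx ∈ cone Â`. For a unit vector `Âx` of
`cone Â`, put `t = ‖Āx‖`; if `t ≤ 1` the same bound applies, and otherwise homogeneity gives
`‖Āx - Âx‖ ≤ γ' t`, so `t ≤ 1 + γ' t` by the triangle inequality, and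
`γ' t ≤ γ' / (1 - γ') ≤ γ` exactly when `γ' ≤ γ / (γ + 1)`.
-/

open Matrix

/-- Pass from a plain vector in `Fin m → ℝ` to Euclidean space (ℓ² norm). -/
noncomputable def toEuc {m : ℕ} (y : Fin m → ℝ) : EuclideanSpace ℝ (Fin m) :=
  (EuclideanSpace.equiv (Fin m) ℝ).symm y

/-- The cone generated by the columns of a matrix: {Ax : x ≥ 0}. -/
noncomputable def matCone {m n : ℕ} (A : Matrix (Fin m) (Fin n) ℝ) :
    Set (EuclideanSpace ℝ (Fin m)) :=
  {y | ∃ x : Fin n → ℝ, (∀ j, 0 ≤ x j) ∧ y = toEuc (A.mulVec x)}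

lemma coneDisc_le {m : ℕ} {C Chat : Set (EuclideanSpace ℝ (Fin m))} {γ : ℝ} (hγ : 0 ≤ γ)
    (hC : ∀ y ∈ C, ‖y‖ = 1 → ∃ z ∈ Chat, dist y z ≤ γ)
    (hChat : ∀ y ∈ Chat, ‖y‖ = 1 → ∃ z ∈ C, dist y z ≤ γ) :
    coneDisc C Chat ≤ γ := by
  have infDist_le {S T : Set (EuclideanSpace ℝ (Fin m))}
      (hS : ∀ y ∈ S, ‖y‖ = 1 → ∃ z ∈ T, dist y z ≤ γ)
      (y : {y : EuclideanSpace ℝ (Fin m) // y ∈ S ∧ ‖y‖ = 1}) :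
      Metric.infDist (y : EuclideanSpace ℝ (Fin m)) T ≤ γ := by
    obtain ⟨z, hzT, hz⟩ := hS y y.2.1 y.2.2
    exact (Metric.infDist_le_dist_of_mem hzT).trans hz
  exact max_le (Real.iSup_le (infDist_le hC) hγ) (Real.iSup_le (infDist_le hChat) hγ)

section Homogeneity

variable {V E : Type*} [AddCommGroup V] [Module ℝ V] [NormedAddCommGroup E] [NormedSpace ℝ E]
  {f g : V →ₗ[ℝ] E} {P : Set V} {γ γ' : ℝ}

lemma norm_sub_le_mul_norm_of_one_le (hP : ∀ x ∈ P, ∀ c : ℝ, 0 < c → c • x ∈ P)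
    (happrox : ∀ x ∈ P, ‖f x‖ ≤ 1 → ‖f x - g x‖ ≤ γ') {x : V} (hx : x ∈ P)
    (hfx : 1 ≤ ‖f x‖) : ‖f x - g x‖ ≤ γ' * ‖f x‖ := by
  have ht : 0 < ‖f x‖ := one_pos.trans_le hfx
  have hscaled := happrox (‖f x‖⁻¹ • x) (hP x hx _ (inv_pos.mpr ht))
    (by rw [map_smul, norm_smul, norm_inv, norm_norm, inv_mul_cancel₀ ht.ne'])
  rw [map_smul, map_smul, ← smul_sub, norm_smul, norm_inv, norm_norm,
    inv_mul_le_iff₀ ht] at hscaled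
  linarith

lemma norm_sub_le_of_norm_right_eq_one (hP : ∀ x ∈ P, ∀ c : ℝ, 0 < c → c • x ∈ P)
    (happrox : ∀ x ∈ P, ‖f x‖ ≤ 1 → ‖f x - g x‖ ≤ γ') (hγ : 0 < γ)
    (hγ' : γ' ≤ γ / (γ + 1)) {x : V} (hx : x ∈ P) (hgx : ‖g x‖ = 1) :
    ‖f x - g x‖ ≤ γ := by
  have hkey : γ' * (γ + 1) ≤ γ := (le_div_iff₀ (by linarith)).mp hγ'
  rcases le_or_gt ‖f x‖ 1 with hfx | hfx
  · exact (happrox x hx hfx).trans (hγ'.trans (div_le_self hγ.le (by linarith)))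
  · have hhom := norm_sub_le_mul_norm_of_one_le hP happrox hx hfx.le
    have htriangle : ‖f x‖ - 1 ≤ ‖f x - g x‖ := hgx ▸ norm_sub_norm_le (f x) (g x)
    nlinarith [mul_le_mul_of_nonneg_right hkey (norm_nonneg (f x))]

end Homogeneity

noncomputable def Matrix.toEucLin {m n : ℕ} (A : Matrix (Fin m) (Fin n) ℝ) :
    (Fin n → ℝ) →ₗ[ℝ] EuclideanSpace ℝ (Fin m) :=
  (EuclideanSpace.equiv (Fin m) ℝ).symm.toLinearEquiv.toLinearMap ∘ₗ A.mulVecLin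

theorem stmt13_general {m n : ℕ} (Abar Ahat : Matrix (Fin m) (Fin n) ℝ) (γ γ' : ℝ)
    (hγ : 0 < γ) (hγ' : γ' ≤ γ / (γ + 1))
    (happrox : ∀ x : Fin n → ℝ, (∀ j, 0 ≤ x j) → ‖toEuc (Abar.mulVec x)‖ ≤ 1 →
      ‖toEuc (Abar.mulVec x) - toEuc (Ahat.mulVec x)‖ ≤ γ') :
    coneDisc (matCone Abar) (matCone Ahat) ≤ γ := by
  have happrox' : ∀ x ∈ {x : Fin n → ℝ | ∀ j, 0 ≤ x j},
      ‖Abar.toEucLin x‖ ≤ 1 → ‖Abar.toEucLin x - Ahat.toEucLin x‖ ≤ γ' := happrox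
  have hP : ∀ x ∈ {x : Fin n → ℝ | ∀ j, 0 ≤ x j}, ∀ c : ℝ, 0 < c →
      c • x ∈ {x : Fin n → ℝ | ∀ j, 0 ≤ x j} :=
    fun x hx c hc j => mul_nonneg hc.le (hx j)
  apply coneDisc_le hγ.le
  · rintro _ ⟨x, hx, rfl⟩ hnorm
    refine ⟨_, ⟨x, hx, rfl⟩, ?_⟩
    rw [dist_eq_norm]
    exact (happrox x hx hnorm.le).trans (hγ'.trans (div_le_self hγ.le (by linarith)))
  · rintro _ ⟨x, hx, rfl⟩ hnorm
    refine ⟨_, ⟨x, hx, rfl⟩, ?_⟩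
    rw [dist_eq_norm']
    exact norm_sub_le_of_norm_right_eq_one hP happrox' hγ hγ' hx hnorm

theorem stmt13 {m n : ℕ} (Abar Ahat : Matrix (Fin m) (Fin n) ℝ) (γ γ' : ℝ)
    (hγ : 0 < γ) (hγ'0 : 0 ≤ γ') (hγ' : γ' ≤ γ / (γ + 1))
    (happrox : ∀ x : Fin n → ℝ, (∀ j, 0 ≤ x j) → ‖toEuc (Abar.mulVec x)‖ ≤ 1 →
      ‖toEuc (Abar.mulVec x) - toEuc (Ahat.mulVec x)‖ ≤ γ') :
    coneDisc (matCone Abar) (matCone Ahat) ≤ γ :=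
  stmt13_general Abar Ahat γ γ' hγ hγ' happrox
end

section
/- Let Ā, Â ∈ ℝ^{m×n}, β ≥ 0, and μ ∈ ℝ^{n×n} with all entries of μ nonnegative, and suppose the block matrix [[I_m, Â−Ā], [(Â−Ā)ᵀ, β·ĀᵀĀ − μ]] is symmetric positive semidefinite. Then for every symmetric X ∈ ℝ^{n×n} that is entrywise nonnegative, positive semidefinite, and satisfies ⟨ĀᵀĀ, X⟩ ≤ 1, one has ⟨(Â−Ā)ᵀ(Â−Ā), X⟩ ≤ β. -/
open Matrix

/-- The trace inner product ⟨M,N⟩ = trace(Mᵀ N). -/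
def matInner {k : ℕ} (M Nn : Matrix (Fin k) (Fin k) ℝ) : ℝ :=
  Matrix.trace (Mᵀ * Nn)

/-!
By the Schur complement of the identity block, the hypothesis says exactly that
`β ĀᵀĀ - μ - (Â - Ā)ᵀ(Â - Ā)` is positive semidefinite. Pairing it with `X` gives a nonnegative
number, since the trace inner product of two positive semidefinite matrices is nonnegative, so
`⟨(Â - Ā)ᵀ(Â - Ā), X⟩ ≤ β ⟨ĀᵀĀ, X⟩ - ⟨μ, X⟩ ≤ β`, using `⟨μ, X⟩ ≥ 0` for entrywise nonnegative
matrices.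
-/

namespace Matrix

variable {m n R : Type*} [Fintype m] [Fintype n] [DecidableEq m]
  [CommRing R] [PartialOrder R] [StarRing R] [StarOrderedRing R] [NoZeroDivisors R]

theorem posSemidef_fromBlocks_one_iff (B : Matrix m n R) (D : Matrix n n R) :
    (fromBlocks 1 B Bᴴ D).PosSemidef ↔ (D - Bᴴ * B).PosSemidef := by
  let _ : Invertible (1 : Matrix m m R) := invertibleOne
  rw [PosDef.fromBlocks₁₁ B D PosDef.one, inv_one, Matrix.mul_one]

end Matrix

section matInner

variable {k : ℕ}

theorem matInner_eq_sum (M X : Matrix (Fin k) (Fin k) ℝ) :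
    matInner M X = ∑ i, ∑ j, M i j * X i j := by
  simp only [matInner, trace, diag, mul_apply, transpose_apply]
  exact Finset.sum_comm

theorem matInner_sub_left (M N X : Matrix (Fin k) (Fin k) ℝ) :
    matInner (M - N) X = matInner M X - matInner N X := by
  simp only [matInner_eq_sum, Matrix.sub_apply, sub_mul, Finset.sum_sub_distrib]

theorem matInner_smul_left (c : ℝ) (M X : Matrix (Fin k) (Fin k) ℝ) :
    matInner (c • M) X = c * matInner M X := by
  simp only [matInner_eq_sum, Matrix.smul_apply, smul_eq_mul, mul_assoc, Finset.mul_sum]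

theorem matInner_nonneg_of_nonneg {M X : Matrix (Fin k) (Fin k) ℝ}
    (hM : ∀ i j, 0 ≤ M i j) (hX : ∀ i j, 0 ≤ X i j) : 0 ≤ matInner M X := by
  rw [matInner_eq_sum]
  exact Finset.sum_nonneg fun i _ => Finset.sum_nonneg fun j _ => mul_nonneg (hM i j) (hX i j)

theorem matInner_nonneg_of_posSemidef {M X : Matrix (Fin k) (Fin k) ℝ}
    (hM : M.PosSemidef) (hX : X.PosSemidef) : 0 ≤ matInner M X := by
  -- `⟨M, X⟩` is the sum of the entries of `M ⊙ X`, which is PSD by the Schur product theorem.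
  have h := (hM.hadamard hX).dotProduct_mulVec_nonneg (fun _ => 1)
  simpa [matInner_eq_sum, dotProduct, mulVec] using h

end matInner

theorem stmt16 {m n : ℕ} (Abar Ahat : Matrix (Fin m) (Fin n) ℝ) (β : ℝ) (hβ : 0 ≤ β)
    (μ : Matrix (Fin n) (Fin n) ℝ) (hμ : ∀ i j, 0 ≤ μ i j)
    (hpsd : (Matrix.fromBlocks (1 : Matrix (Fin m) (Fin m) ℝ) (Ahat - Abar)
        (Ahat - Abar)ᵀ (β • (Abarᵀ * Abar) - μ)).PosSemidef) :
    ∀ X : Matrix (Fin n) (Fin n) ℝ, X.IsSymm → (∀ i j, 0 ≤ X i j) → X.PosSemidef →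
      matInner (Abarᵀ * Abar) X ≤ 1 →
      matInner ((Ahat - Abar)ᵀ * (Ahat - Abar)) X ≤ β := by
  intro X _ hX_nonneg hX_psd hX_le
  rw [← conjTranspose_eq_transpose_of_trivial, posSemidef_fromBlocks_one_iff,
    conjTranspose_eq_transpose_of_trivial] at hpsd
  have h_gap := matInner_nonneg_of_posSemidef hpsd hX_psd
  rw [matInner_sub_left, matInner_sub_left, matInner_smul_left] at h_gap
  have h_μ := matInner_nonneg_of_nonneg hμ hX_nonneg
  nlinarith [mul_le_mul_of_nonneg_left hX_le hβ]
end

section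
/- Let u, u' ∈ ℝⁿ be unit vectors with ‖u − u'‖₂ ≤ √2. Then: (i) for every r ∈ [0,1], ‖r·u + (1−r)·u'‖₂ ≥ 1/√2 (in particular r·u + (1−r)·u' ≠ 0); and (ii) defining ū(r) = (r·u + (1−r)·u') / ‖r·u + (1−r)·u'‖₂ for r ∈ [0,1], for all r₁, r₂ ∈ [0,1] one has ‖ū(r₁) − ū(r₂)‖₂ ≤ 2√2 · ‖u − u'‖₂ · |r₁ − r₂|. -/
/-!
Since `‖u - u'‖² = 2 - 2⟪u, u'⟫`, the hypothesis `‖u - u'‖ ≤ √2` says `⟪u, u'⟫ ≥ 0`, so the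
chord point `r • u + (1 - r) • u'` has squared norm at least `r² + (1 - r)² ≥ 1/2`.
Normalization `x ↦ x / ‖x‖` is `2 / ‖a‖`-Lipschitz at `a`, and the chord moves at speed
`‖u - u'‖`, which gives the Lipschitz bound with constant `2√2 ‖u - u'‖`.
-/

open scoped RealInnerProductSpace

section Normalize

variable {V : Type*} [NormedAddCommGroup V] [NormedSpace ℝ V]

lemma norm_normalize_le_one (x : V) : ‖NormedSpace.normalize x‖ ≤ 1 := by
  by_cases hx : x = 0
  · simp [hx]
  · exact (NormedSpace.norm_normalize_eq_one_iff.2 hx).le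

lemma norm_normalize_sub_normalize_le {a : V} (ha : a ≠ 0) (b : V) :
    ‖NormedSpace.normalize a - NormedSpace.normalize b‖ ≤ 2 * ‖a - b‖ / ‖a‖ := by
  have hna : 0 < ‖a‖ := norm_pos_iff.2 ha
  have hdecomp : NormedSpace.normalize a - NormedSpace.normalize b
      = ‖a‖⁻¹ • ((a - b) + (‖b‖ - ‖a‖) • NormedSpace.normalize b) := by
    rw [sub_smul, NormedSpace.norm_smul_normalize, smul_add, smul_sub, smul_sub, smul_smul,
      inv_mul_cancel₀ hna.ne', one_smul, NormedSpace.normalize]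
    abel
  have hshift : ‖(‖b‖ - ‖a‖) • NormedSpace.normalize b‖ ≤ ‖a - b‖ := by
    rw [norm_smul, Real.norm_eq_abs, norm_sub_rev a b]
    calc |‖b‖ - ‖a‖| * ‖NormedSpace.normalize b‖ ≤ |‖b‖ - ‖a‖| * 1 := by
          gcongr; exact norm_normalize_le_one b
      _ ≤ ‖b - a‖ := by rw [mul_one]; exact abs_norm_sub_norm_le b a
  calc ‖NormedSpace.normalize a - NormedSpace.normalize b‖
      = ‖a‖⁻¹ * ‖(a - b) + (‖b‖ - ‖a‖) • NormedSpace.normalize b‖ := by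
        rw [hdecomp, norm_smul, Real.norm_eq_abs, abs_of_pos (inv_pos.2 hna)]
    _ ≤ ‖a‖⁻¹ * (‖a - b‖ + ‖a - b‖) := by gcongr; exact (norm_add_le _ _).trans (by linarith)
    _ = 2 * ‖a - b‖ / ‖a‖ := by ring

end Normalize

section UnitVectors

variable {E : Type*} [NormedAddCommGroup E] [InnerProductSpace ℝ E] {u u' : E}

lemma real_inner_nonneg_of_norm_sub_le_sqrt_two (hu : ‖u‖ = 1) (hu' : ‖u'‖ = 1)
    (hd : ‖u - u'‖ ≤ √2) : 0 ≤ ⟪u, u'⟫ := by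
  have hsq : ‖u - u'‖ ^ 2 ≤ 2 := by
    calc ‖u - u'‖ ^ 2 ≤ √2 ^ 2 := by gcongr
      _ = 2 := Real.sq_sqrt zero_le_two
  rw [norm_sub_sq_real, hu, hu'] at hsq
  linarith

lemma one_div_sqrt_two_le_norm_smul_add_one_sub_smul (hu : ‖u‖ = 1) (hu' : ‖u'‖ = 1)
    (hinner : 0 ≤ ⟪u, u'⟫) {r : ℝ} (hr₀ : 0 ≤ r) (hr₁ : r ≤ 1) :
    1 / √2 ≤ ‖r • u + (1 - r) • u'‖ := by
  have hsq : ‖r • u + (1 - r) • u'‖ ^ 2 = r ^ 2 + (1 - r) ^ 2 + 2 * (r * (1 - r) * ⟪u, u'⟫) := by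
    rw [norm_add_sq_real, norm_smul, norm_smul, real_inner_smul_left, real_inner_smul_right,
      hu, hu', Real.norm_eq_abs, Real.norm_eq_abs, abs_of_nonneg hr₀,
      abs_of_nonneg (sub_nonneg.2 hr₁)]
    ring
  have hcross : 0 ≤ r * (1 - r) * ⟪u, u'⟫ :=
    mul_nonneg (mul_nonneg hr₀ (sub_nonneg.2 hr₁)) hinner
  have hhalf : 1 / 2 ≤ ‖r • u + (1 - r) • u'‖ ^ 2 := by
    nlinarith [sq_nonneg (2 * r - 1)]
  calc 1 / √2 = √(1 / 2) := by rw [Real.sqrt_div' _ zero_le_two, Real.sqrt_one]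
    _ ≤ √(‖r • u + (1 - r) • u'‖ ^ 2) := Real.sqrt_le_sqrt hhalf
    _ = ‖r • u + (1 - r) • u'‖ := Real.sqrt_sq (norm_nonneg _)

end UnitVectors

theorem stmt19 {n : ℕ} (u u' : EuclideanSpace ℝ (Fin n))
    (hu : ‖u‖ = 1) (hu' : ‖u'‖ = 1) (hd : ‖u - u'‖ ≤ Real.sqrt 2) :
    (∀ r : ℝ, r ∈ Set.Icc (0 : ℝ) 1 →
      1 / Real.sqrt 2 ≤ ‖r • u + (1 - r) • u'‖ ∧ r • u + (1 - r) • u' ≠ 0) ∧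
    (∀ r₁ r₂ : ℝ, r₁ ∈ Set.Icc (0 : ℝ) 1 → r₂ ∈ Set.Icc (0 : ℝ) 1 →
      ‖‖r₁ • u + (1 - r₁) • u'‖⁻¹ • (r₁ • u + (1 - r₁) • u')
          - ‖r₂ • u + (1 - r₂) • u'‖⁻¹ • (r₂ • u + (1 - r₂) • u')‖
        ≤ 2 * Real.sqrt 2 * ‖u - u'‖ * |r₁ - r₂|) := by
  have hinner := real_inner_nonneg_of_norm_sub_le_sqrt_two hu hu' hd
  have hlb : ∀ r ∈ Set.Icc (0 : ℝ) 1, 1 / √2 ≤ ‖r • u + (1 - r) • u'‖ := fun r hr =>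
    one_div_sqrt_two_le_norm_smul_add_one_sub_smul hu hu' hinner hr.1 hr.2
  have hne : ∀ r ∈ Set.Icc (0 : ℝ) 1, r • u + (1 - r) • u' ≠ 0 := fun r hr =>
    norm_pos_iff.1 ((by positivity : (0 : ℝ) < 1 / √2).trans_le (hlb r hr))
  refine ⟨fun r hr => ⟨hlb r hr, hne r hr⟩, fun r₁ r₂ h₁ h₂ => ?_⟩
  have hinv : ‖r₁ • u + (1 - r₁) • u'‖⁻¹ ≤ √2 := by
    simpa only [one_div, inv_inv] using inv_anti₀ (by positivity) (hlb r₁ h₁)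
  have hchord : r₁ • u + (1 - r₁) • u' - (r₂ • u + (1 - r₂) • u') = (r₁ - r₂) • (u - u') := by
    module
  calc _ ≤ 2 * ‖r₁ • u + (1 - r₁) • u' - (r₂ • u + (1 - r₂) • u')‖
          / ‖r₁ • u + (1 - r₁) • u'‖ := norm_normalize_sub_normalize_le (hne r₁ h₁) _
    _ ≤ 2 * ‖r₁ • u + (1 - r₁) • u' - (r₂ • u + (1 - r₂) • u')‖ * √2 := by
        rw [div_eq_mul_inv]; gcongr
    _ = 2 * √2 * ‖u - u'‖ * |r₁ - r₂| := by
        rw [hchord, norm_smul, Real.norm_eq_abs]; ring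
end
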